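/- For 0 = t₁ < t₂ < π, the Jacobian determinant of the chord-angle map Q(t₁,t₂) = (α(t₁,t₂), β(t₁,t₂)) for the rectangular elastica R is strictly negative; specifically it equals (2 sin t₂ / (l² √(1+sin²t₂)))·(−Δξ) < 0 where l = |R(t₂) − R(0)| and Δξ = ξ(t₂) − ξ(0) > 0. -/

import Mathlib

open Real Complex

noncomputable def xi (t : ℝ) : ℝ :=
  ∫ τ in (0:ℝ)..t, Real.sin τ ^ 2 / Real.sqrt (1 + Real.sin τ ^ 2)

noncomputable def R (t : ℝ) : ℂ := (Real.sin t : ℂ) + Complex.I * (xi t : ℂ)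

noncomputable def alphaAng (t₁ t₂ : ℝ) : ℝ := Complex.arg (deriv R t₁ / (R t₂ - R t₁))
noncomputable def betaAng (t₁ t₂ : ℝ) : ℝ := Complex.arg (deriv R t₂ / (R t₂ - R t₁))

/-- The Jacobian determinant of the chord-angle map `(t₁,t₂) ↦ (α,β)`. -/
noncomputable def detDQ (t₁ t₂ : ℝ) : ℝ :=
  deriv (fun s => alphaAng s t₂) t₁ * deriv (fun s => betaAng t₁ s) t₂
    - deriv (fun s => alphaAng t₁ s) t₂ * deriv (fun s => betaAng s t₂) t₁


/-! The angle `arg (N/D)` has logarithmic derivative `Im (N'/N - D'/D)`. Applied to the four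
partial derivatives of the chord angles this gives, with `k = Im (R''/R') = κ |R'|` and the chord
`L = R(t₂) - R(t₁)`, the Jacobian `k₁ k₂ + k₂ Im (R'(t₁)/L) - k₁ Im (R'(t₂)/L)`.  For the elastica
`k(t) = 2 sin t / √(1 + sin² t)`, which vanishes at `t₁ = 0`; with `R(0) = 0` and `R'(0) = 1` the
Jacobian reduces to `k(t₂) · Im (1/R(t₂)) = k(t₂) · (-ξ(t₂)) / |R(t₂)|²`, negative since `ξ > 0`
on `(0, π)`. -/

theorem HasDerivAt.carg {f : ℝ → ℂ} {f' : ℂ} {x : ℝ} (hf : HasDerivAt f f' x)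
    (h : f x ∈ slitPlane) : HasDerivAt (fun t => (f t).arg) (f' / f x).im x := by
  have := imCLM.hasFDerivAt.comp_hasDerivAt x ((hasDerivAt_log h).comp x hf)
  simpa [Function.comp_def, log_im, div_eq_inv_mul] using this

theorem HasDerivAt.carg_div {N D : ℝ → ℂ} {N' D' : ℂ} {x : ℝ} (hN : HasDerivAt N N' x)
    (hD : HasDerivAt D D' x) (h : N x / D x ∈ slitPlane) :
    HasDerivAt (fun t => (N t / D t).arg) (N' / N x - D' / D x).im x := by
  obtain ⟨hN0, hD0⟩ := div_ne_zero_iff.mp (slitPlane_ne_zero h)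
  convert (hN.div hD hD0).carg h using 2
  · rfl
  · simp only [Pi.div_apply]
    field_simp

theorem div_mem_slitPlane {w z : ℂ} (hw : 0 < w.im) (hz : 0 < z.re) (hz' : 0 ≤ z.im) :
    w / z ∈ slitPlane := by
  have hn : 0 < normSq z := normSq_pos.mpr fun h => by simp [h] at hz
  rw [mem_slitPlane_iff, div_re, div_im, ← add_div, ← sub_div]
  rcases lt_or_ge 0 w.re with hre | hre
  · exact .inl (by positivity)
  · exact .inr (div_pos (by nlinarith) hn).ne'

noncomputable def xiDeriv (t : ℝ) : ℝ := Real.sin t ^ 2 / √(1 + Real.sin t ^ 2)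

noncomputable def xiDeriv2 (t : ℝ) : ℝ :=
  Real.sin t * Real.cos t * (2 + Real.sin t ^ 2) / ((1 + Real.sin t ^ 2) * √(1 + Real.sin t ^ 2))

theorem continuous_xiDeriv : Continuous xiDeriv :=
  .div (by fun_prop) (by fun_prop) fun t => (by positivity : 0 < √(1 + Real.sin t ^ 2)).ne'

theorem hasDerivAt_xi (t : ℝ) : HasDerivAt xi (xiDeriv t) t :=
  intervalIntegral.integral_hasDerivAt_right (continuous_xiDeriv.intervalIntegrable 0 t)
    (continuous_xiDeriv.stronglyMeasurableAtFilter _ _) continuous_xiDeriv.continuousAt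

theorem xi_zero : xi 0 = 0 := intervalIntegral.integral_same

theorem xi_pos {t : ℝ} (h0 : 0 < t) (hπ : t < π) : 0 < xi t := by
  refine intervalIntegral.intervalIntegral_pos_of_pos_on
    (continuous_xiDeriv.intervalIntegrable 0 t) (fun τ hτ => ?_) h0
  have := sin_pos_of_pos_of_lt_pi hτ.1 (hτ.2.trans hπ)
  exact div_pos (by positivity) (by positivity)

theorem hasDerivAt_xiDeriv (t : ℝ) : HasDerivAt xiDeriv (xiDeriv2 t) t := by
  have hq : 0 < √(1 + Real.sin t ^ 2) := by positivity
  have hq2 : √(1 + Real.sin t ^ 2) ^ 2 = 1 + Real.sin t ^ 2 := sq_sqrt (by positivity)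
  have hsq := (Real.hasDerivAt_sin t).fun_pow 2
  have hroot := (hsq.const_add 1).sqrt (by positivity : (0:ℝ) < 1 + Real.sin t ^ 2).ne'
  refine (hsq.div hroot hq.ne').congr_deriv ?_
  rw [xiDeriv2]
  field_simp
  linear_combination 2 * Real.sin t ^ 3 * Real.cos t * hq2

theorem R_re (t : ℝ) : (R t).re = Real.sin t := by
  simp only [R, add_re, ofReal_re, mul_re, I_re, I_im, ofReal_im]; ring

theorem R_im (t : ℝ) : (R t).im = xi t := by
  simp only [R, add_im, ofReal_im, mul_im, I_re, I_im, ofReal_re]; ring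

theorem R_zero : R 0 = 0 := by simp [R, xi_zero]

theorem hasDerivAt_R (t : ℝ) : HasDerivAt R (Real.cos t + I * xiDeriv t) t :=
  (Real.hasDerivAt_sin t).ofReal_comp.add ((hasDerivAt_xi t).ofReal_comp.const_mul I)

theorem deriv_R : deriv R = fun t => Real.cos t + I * xiDeriv t :=
  funext fun t => (hasDerivAt_R t).deriv

theorem deriv_R_zero : deriv R 0 = 1 := by simp [deriv_R, xiDeriv]

theorem hasDerivAt_deriv_R (t : ℝ) :
    HasDerivAt (deriv R) (-Real.sin t + I * xiDeriv2 t) t := by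
  rw [deriv_R]
  exact (Real.hasDerivAt_cos t).ofReal_comp.add ((hasDerivAt_xiDeriv t).ofReal_comp.const_mul I)
    |>.congr_deriv (by push_cast; ring)

/-- `turningRate t = κ(t) |R'(t)|`, the derivative of the tangent angle `arg R'(t)`. -/
noncomputable def turningRate (t : ℝ) : ℝ := (deriv (deriv R) t / deriv R t).im

theorem turningRate_eq (t : ℝ) : turningRate t = 2 * Real.sin t / √(1 + Real.sin t ^ 2) := by
  have hq2 : √(1 + Real.sin t ^ 2) ^ 2 = 1 + Real.sin t ^ 2 := sq_sqrt (by positivity)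
  have hspeed : Real.cos t ^ 2 * √(1 + Real.sin t ^ 2) ^ 2 + Real.sin t ^ 4 = 1 := by
    linear_combination Real.cos t ^ 2 * hq2 + (1 + Real.sin t ^ 2) * Real.sin_sq_add_cos_sq t
  rw [turningRate, (hasDerivAt_deriv_R t).deriv, deriv_R, div_im, normSq_apply]
  simp only [add_re, add_im, neg_re, neg_im, mul_re, mul_im, I_re, I_im, ofReal_re, ofReal_im,
    xiDeriv, xiDeriv2, zero_mul, sub_zero, mul_zero, add_zero, zero_add, one_mul, neg_zero]
  field_simp
  rw [hspeed]
  linear_combination Real.sin t * √(1 + Real.sin t ^ 2) ^ 2 * (2 + Real.sin t ^ 2) *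
    Real.sin_sq_add_cos_sq t + 2 * Real.sin t * hq2

-- Since `Im (R'(tᵢ)/L) = |R'(tᵢ)| sin(angle at tᵢ) / |L|`, this is the formula
-- `|R'(t₁)| |R'(t₂)| (κ₁ κ₂ + κ₂ sin α / l - κ₁ sin β / l)`.
theorem detDQ_eq {t₁ t₂ : ℝ} (h₁ : deriv R t₁ / (R t₂ - R t₁) ∈ slitPlane)
    (h₂ : deriv R t₂ / (R t₂ - R t₁) ∈ slitPlane) :
    detDQ t₁ t₂ = turningRate t₁ * turningRate t₂
      + turningRate t₂ * (deriv R t₁ / (R t₂ - R t₁)).im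
      - turningRate t₁ * (deriv R t₂ / (R t₂ - R t₁)).im := by
  have hR (t : ℝ) : HasDerivAt R (deriv R t) t := (hasDerivAt_R t).differentiableAt.hasDerivAt
  have hR' (t : ℝ) : HasDerivAt (deriv R) (deriv (deriv R) t) t :=
    (hasDerivAt_deriv_R t).differentiableAt.hasDerivAt
  have hα₁ := (hR' t₁).carg_div ((hR t₁).const_sub (R t₂)) h₁
  have hβ₁ := (hasDerivAt_const t₁ (deriv R t₂)).carg_div ((hR t₁).const_sub (R t₂)) h₂
  have hα₂ := (hasDerivAt_const t₂ (deriv R t₁)).carg_div ((hR t₂).sub_const (R t₁)) h₁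
  have hβ₂ := (hR' t₂).carg_div ((hR t₂).sub_const (R t₁)) h₂
  simp only [detDQ, alphaAng, betaAng, hα₁.deriv, hβ₁.deriv, hα₂.deriv, hβ₂.deriv, turningRate,
    zero_div, zero_sub, neg_div, sub_neg_eq_add, add_im, sub_im, neg_im, zero_im]
  ring

theorem detDQ_neg_on_boundary (t₂ : ℝ) (h1 : 0 < t₂) (h2 : t₂ < π) :
    detDQ 0 t₂ =
      (2 * Real.sin t₂ /
        (‖R t₂ - R 0‖ ^ 2 * Real.sqrt (1 + Real.sin t₂ ^ 2)))
        * (-(xi t₂ - xi 0)) ∧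
    detDQ 0 t₂ < 0 := by
  have hs : 0 < Real.sin t₂ := sin_pos_of_pos_of_lt_pi h1 h2
  have hξ : 0 < xi t₂ := xi_pos h1 h2
  have hc : R t₂ ≠ 0 := ne_of_apply_ne re (by rw [R_re, zero_re]; exact hs.ne')
  have h₁ : deriv R 0 / (R t₂ - R 0) ∈ slitPlane := by
    rw [deriv_R_zero, R_zero, sub_zero, mem_slitPlane_iff, one_div, inv_re, R_re]
    exact .inl (div_pos hs (normSq_pos.mpr hc))
  have h₂ : deriv R t₂ / (R t₂ - R 0) ∈ slitPlane := by
    rw [R_zero, sub_zero]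
    refine div_mem_slitPlane ?_ (by rwa [R_re]) (by rw [R_im]; exact hξ.le)
    simp only [deriv_R, add_im, ofReal_im, mul_im, I_re, I_im, ofReal_re, zero_mul, one_mul,
      zero_add]
    exact div_pos (pow_pos hs 2) (by positivity)
  have heq : detDQ 0 t₂ = 2 * Real.sin t₂ / (‖R t₂ - R 0‖ ^ 2 * √(1 + Real.sin t₂ ^ 2))
      * -(xi t₂ - xi 0) := by
    rw [detDQ_eq h₁ h₂, turningRate_eq, turningRate_eq, deriv_R_zero, R_zero, sub_zero, one_div,
      inv_im, normSq_eq_norm_sq, R_im, xi_zero, sub_zero]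
    simp only [Real.sin_zero, mul_zero, zero_div, zero_mul, zero_add, sub_zero]
    ring
  refine ⟨heq, heq ▸ mul_neg_of_pos_of_neg ?_ (by rw [xi_zero, sub_zero]; linarith)⟩
  rw [R_zero, sub_zero]
  have := norm_pos_iff.mpr hc
  positivity
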